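/- Let g : [0,∞) → [0,∞) be continuous and strictly decreasing, let μ be Lebesgue measure on ℝ, let a ≥ 0, and let p be the Sugeno integral of g over [0,a] with respect to μ. Then g(p) ≥ p. Moreover, if 0 < p < a, then g(p) = p. -/

import Mathlib

/-!
For antitone `g`, a level `α > g s` is reached only on `[0, s]`, so each term of the Sugeno
integral is at most `max s (g s)`; conversely a level `t ≤ a` with `t ≤ g t` is reached on all
of `[0, t]`, so `t` is at most the integral. Applied with `s` just left of `p` and `t` just right
of `p`, continuity of `g` turns these bounds into `p ≤ g p`, and into `g p ≤ p` when `p < a`.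
-/

open MeasureTheory Set

/-- Sugeno integral of `f` over `A` w.r.t. measure `μ`. -/
noncomputable def sugeno (μ : Measure ℝ) (A : Set ℝ) (f : ℝ → ℝ) : ℝ :=
  ⨆ α : {a : ℝ // 0 ≤ a}, min α.1 (μ (A ∩ {x | α.1 ≤ f x})).toReal

open Filter Topology

section Sugeno

variable {μ : Measure ℝ} {A : Set ℝ} {f : ℝ → ℝ}

theorem sugeno_nonneg : 0 ≤ sugeno μ A f :=
  Real.iSup_nonneg fun α => le_min α.2 ENNReal.toReal_nonneg

theorem sugeno_le {c : ℝ}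
    (h : ∀ α, 0 ≤ α → min α (μ (A ∩ {x | α ≤ f x})).toReal ≤ c) : sugeno μ A f ≤ c :=
  haveI : Nonempty {a : ℝ // 0 ≤ a} := ⟨⟨0, le_rfl⟩⟩
  ciSup_le fun α => h α.1 α.2

theorem le_sugeno (hA : μ A ≠ ⊤) {α : ℝ} (hα : 0 ≤ α) :
    min α (μ (A ∩ {x | α ≤ f x})).toReal ≤ sugeno μ A f := by
  refine le_ciSup (f := fun α : {a : ℝ // 0 ≤ a} => min α.1 (μ (A ∩ {x | α.1 ≤ f x})).toReal)
    ⟨(μ A).toReal, ?_⟩ ⟨α, hα⟩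
  rintro _ ⟨β, rfl⟩
  exact (min_le_right _ _).trans (ENNReal.toReal_mono hA (measure_mono inter_subset_left))

end Sugeno

section Antitone

variable {g : ℝ → ℝ} {a : ℝ}

theorem sugeno_volume_Icc_le_max (hg : AntitoneOn g (Ici 0)) {s : ℝ} (hs : 0 ≤ s) :
    sugeno volume (Icc 0 a) g ≤ max s (g s) := by
  refine sugeno_le fun α _ => ?_
  rcases le_or_gt α (g s) with hαs | hsα
  · exact (min_le_left _ _).trans (hαs.trans (le_max_right _ _))
  · have hsub : Icc 0 a ∩ {x | α ≤ g x} ⊆ Icc 0 s := by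
      rintro x ⟨⟨hx0, -⟩, hαx⟩
      refine ⟨hx0, not_lt.1 fun hsx => ?_⟩
      exact (hαx.trans (hg hs hx0 hsx.le)).not_gt hsα
    calc min α (volume (Icc 0 a ∩ {x | α ≤ g x})).toReal
        ≤ (volume (Icc 0 s)).toReal :=
          (min_le_right _ _).trans (ENNReal.toReal_mono (by simp) (measure_mono hsub))
      _ = s := by simp [hs]
      _ ≤ max s (g s) := le_max_left _ _

theorem le_sugeno_volume_Icc (hg : AntitoneOn g (Ici 0)) {t : ℝ} (ht : t ∈ Icc 0 a)
    (htg : t ≤ g t) : t ≤ sugeno volume (Icc 0 a) g := by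
  have hsub : Icc 0 t ⊆ Icc 0 a ∩ {x | t ≤ g x} := fun x ⟨hx0, hxt⟩ =>
    ⟨⟨hx0, hxt.trans ht.2⟩, htg.trans (hg hx0 ht.1 hxt)⟩
  have hvol : t ≤ (volume (Icc 0 a ∩ {x | t ≤ g x})).toReal := by
    calc t = (volume (Icc 0 t)).toReal := by simp [ht.1]
      _ ≤ _ := ENNReal.toReal_mono (measure_ne_top_of_subset inter_subset_left (by simp))
          (measure_mono hsub)
  calc t = min t (volume (Icc 0 a ∩ {x | t ≤ g x})).toReal := (min_eq_left hvol).symm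
    _ ≤ _ := le_sugeno (by simp) ht.1

end Antitone

theorem diaz_metcalf_stmt1_general (g : ℝ → ℝ) (a : ℝ)
    (hg_cont : ContinuousOn g (Set.Ici 0))
    (hg_anti : StrictAntiOn g (Set.Ici 0))
    (hg_nonneg : ∀ x ∈ Set.Ici (0 : ℝ), 0 ≤ g x)
    (p : ℝ) (hp : p = sugeno volume (Set.Icc 0 a) g) :
    p ≤ g p ∧ (0 < p → p < a → g p = p) := by
  have hp0 : 0 ≤ p := hp ▸ sugeno_nonneg
  have hcont := hg_cont p hp0
  have hle : p ≤ g p := by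
    rcases hp0.eq_or_lt with rfl | hppos
    · exact hg_nonneg 0 self_mem_Ici
    have hleft : ∀ s ∈ Ico 0 p, p ≤ g s := fun s hs => by
      have := hp ▸ sugeno_volume_Icc_le_max hg_anti.antitoneOn hs.1
      exact (le_max_iff.1 this).resolve_left hs.2.not_ge
    have hlim : Tendsto g (𝓝[<] p) (𝓝 (g p)) := (hcont.mono_of_mem_nhdsWithin
      (mem_of_superset (Ico_mem_nhdsLT hppos) Ico_subset_Ici_self)).tendsto
    exact ge_of_tendsto hlim (eventually_of_mem (Ico_mem_nhdsLT hppos) hleft)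
  refine ⟨hle, fun _ hpa => le_antisymm (not_lt.1 fun hgp => ?_) hle⟩
  have habove : ∀ᶠ t in 𝓝[>] p, t < g t := by
    have : ContinuousWithinAt (fun t => g t - t) (Ioi p) p :=
      (hcont.mono (fun t ht => hp0.trans ht.le)).sub continuousWithinAt_id
    filter_upwards [continuousWithinAt_const.eventually_lt this (sub_pos.2 hgp)] with t ht
    linarith
  obtain ⟨t, htg, htpa⟩ := (habove.and (Ioo_mem_nhdsGT hpa)).exists
  exact (hp ▸ le_sugeno_volume_Icc hg_anti.antitoneOn
    ⟨hp0.trans htpa.1.le, htpa.2.le⟩ htg.le).not_gt htpa.1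

theorem diaz_metcalf_stmt1 (g : ℝ → ℝ) (a : ℝ) (ha : 0 ≤ a)
    (hg_cont : ContinuousOn g (Set.Ici 0))
    (hg_anti : StrictAntiOn g (Set.Ici 0))
    (hg_nonneg : ∀ x ∈ Set.Ici (0 : ℝ), 0 ≤ g x)
    (p : ℝ) (hp : p = sugeno volume (Set.Icc 0 a) g) :
    p ≤ g p ∧ (0 < p → p < a → g p = p) :=
  diaz_metcalf_stmt1_general g a hg_cont hg_anti hg_nonneg p hp
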